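/- Let G be a group, F an endomorphism of G, and H, H' ≤ G with H' = gHg⁻¹ for some g ∈ G fixed by F (F(g) = g). Suppose x ∈ G satisfies x⁻¹F(x) = y with y ∈ N_G(H). Then setting x' = xg⁻¹, one has x'⁻¹F(x') = g·y·g⁻¹ and x'H'x'⁻¹ = xHx⁻¹. Consequently the classification maps τ_H and τ_{H'} satisfy τ_{H'}(gyg⁻¹) = τ_H(y). -/

import Mathlib

/-- The conjugate subgroup `g K g⁻¹`. -/
def conjSub {G : Type*} [Group G] (g : G) (K : Subgroup G) : Subgroup G :=
  Subgroup.map (MulAut.conj g).toMonoidHom K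

theorem conjSub_conjSub {G : Type*} [Group G] (a b : G) (K : Subgroup G) :
    conjSub a (conjSub b K) = conjSub (a * b) K := by
  rw [conjSub, conjSub, conjSub, Subgroup.map_map, map_mul]
  rfl

theorem inv_mul_map_mul_inv {G : Type*} [Group G] (F : G →* G) (x g : G) :
    (x * g⁻¹)⁻¹ * F (x * g⁻¹) = g * (x⁻¹ * F x) * (F g)⁻¹ := by
  simp only [map_mul, map_inv, mul_inv_rev, inv_inv, mul_assoc]

theorem tau_base_point_independence_general {G : Type*} [Group G] (F : G →* G)
    (g x y : G) (H : Subgroup G)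
    (hg : F g = g) (hx : x⁻¹ * F x = y) :
    (x * g⁻¹)⁻¹ * F (x * g⁻¹) = g * y * g⁻¹ ∧
      conjSub (x * g⁻¹) (conjSub g H) = conjSub x H := by
  refine ⟨?_, ?_⟩
  · rw [inv_mul_map_mul_inv, hg, hx]
  · rw [conjSub_conjSub, inv_mul_cancel_right]

/-- paper 1.6(a): if `F(g) = g`, `x⁻¹F(x) = y ∈ N_G(H)` and
`H' = gHg⁻¹`, then `x' := xg⁻¹` satisfies `x'⁻¹F(x') = gyg⁻¹` and
`x'H'x'⁻¹ = xHx⁻¹`; consequently `τ_{H'}(gyg⁻¹) = τ_H(y)`. -/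
theorem tau_base_point_independence {G : Type*} [Group G] (F : G →* G)
    (g x y : G) (H : Subgroup G)
    (hg : F g = g) (hy : y ∈ Subgroup.normalizer (H : Set G)) (hx : x⁻¹ * F x = y) :
    (x * g⁻¹)⁻¹ * F (x * g⁻¹) = g * y * g⁻¹ ∧
      conjSub (x * g⁻¹) (conjSub g H) = conjSub x H :=
  tau_base_point_independence_general F g x y H hg hx
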